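/- arXiv:2103.00878 — 7 statements merged into one kernel-verified Lean document; each statement's English description precedes it below -/
import Mathlib

section
/- Sufficiency of reconstructability: if q < N/2, then for any two states x, x̄ ∈ ℝ, noise vector m ∈ ℝᴺ, and attack vectors a, ā ∈ ℝᴺ each supported on at most q indices, the equality x·𝟙 + m + a = x̄·𝟙 + m + ā (where 𝟙 is the all-ones vector in ℝᴺ) implies x = x̄. -/
/-- sufficiency of reconstructability. -/
theorem stmt2 (N q : ℕ) (hq : 2 * q < N) (x xbar : ℝ) (m a abar : Fin N → ℝ)
    (ha : ({j | a j ≠ 0} : Set (Fin N)).ncard ≤ q)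
    (habar : ({j | abar j ≠ 0} : Set (Fin N)).ncard ≤ q)
    (heq : ∀ j, x + m j + a j = xbar + m j + abar j) :
    x = xbar := by
  by_contra h
  have hcov : (Set.univ : Set (Fin N)) ⊆ {j | a j ≠ 0} ∪ {j | abar j ≠ 0} := by
    intro j _
    by_contra hj
    simp only [Set.mem_union, Set.mem_setOf_eq, not_or, not_not] at hj
    have := heq j
    rw [hj.1, hj.2] at this
    exact h (by linarith)
  have h1 : (Set.univ : Set (Fin N)).ncard ≤
      ({j | a j ≠ 0} ∪ {j | abar j ≠ 0} : Set (Fin N)).ncard :=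
    Set.ncard_le_ncard hcov (Set.toFinite _)
  have h2 := Set.ncard_union_le ({j | a j ≠ 0} : Set (Fin N)) {j | abar j ≠ 0}
  rw [Set.ncard_univ, Nat.card_eq_fintype_card, Fintype.card_fin] at h1
  omega
end

section
/- Necessity of reconstructability: if q ≥ N/2 (with N ≥ 1), then there exist states x ≠ x̄ in ℝ and attack vectors a, ā ∈ ℝᴺ, each supported on at most q indices, such that x·𝟙 + a = x̄·𝟙 + ā, where 𝟙 ∈ ℝᴺ is the all-ones vector. -/
/-- necessity of reconstructability. -/
theorem stmt3 (N q : ℕ) (hN : 1 ≤ N) (hq : N ≤ 2 * q) :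
    ∃ (x xbar : ℝ) (a abar : Fin N → ℝ),
      x ≠ xbar ∧
      ({j | a j ≠ 0} : Set (Fin N)).ncard ≤ q ∧
      ({j | abar j ≠ 0} : Set (Fin N)).ncard ≤ q ∧
      (∀ j, x + a j = xbar + abar j) := by
  refine ⟨0, 1, fun j => if (j : ℕ) < q then 1 else 0,
    fun j => if (j : ℕ) < q then 0 else -1, by norm_num, ?_, ?_, ?_⟩
  · have hsub : ({j | (if (j : ℕ) < q then (1:ℝ) else 0) ≠ 0} : Set (Fin N)) ⊆
        ↑(Finset.univ.filter (fun j : Fin N => (j : ℕ) < q)) := by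
      intro j hj
      simp only [Set.mem_setOf_eq] at hj
      by_contra h
      simp at h
      simp [h] at hj
    calc _ ≤ _ := Set.ncard_le_ncard hsub (Finset.finite_toSet _)
      _ = (Finset.univ.filter (fun j : Fin N => (j : ℕ) < q)).card :=
          Set.ncard_coe_finset _
      _ ≤ (Finset.range q).card := by
          refine Finset.card_le_card_of_injOn (fun j => (j : ℕ)) ?_ ?_
          · intro j hj; simp at hj ⊢; exact hj
          · intro j _ k _ h; exact Fin.ext h
      _ = q := Finset.card_range q
  · have hsub : ({j | (if (j : ℕ) < q then (0:ℝ) else -1) ≠ 0} : Set (Fin N)) ⊆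
        ↑(Finset.univ.filter (fun j : Fin N => q ≤ (j : ℕ))) := by
      intro j hj
      simp only [Set.mem_setOf_eq] at hj
      by_contra h
      simp at h
      simp [h] at hj
    calc _ ≤ _ := Set.ncard_le_ncard hsub (Finset.finite_toSet _)
      _ = (Finset.univ.filter (fun j : Fin N => q ≤ (j : ℕ))).card :=
          Set.ncard_coe_finset _
      _ ≤ (Finset.range q).card := by
          refine Finset.card_le_card_of_injOn (fun j => (j : ℕ) - q) ?_ ?_
          · intro j hj
            simp at hj ⊢
            have := j.isLt
            omega
          · intro j hj k hk h
            simp at hj hk h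
            exact Fin.ext (by omega)
      _ = q := Finset.card_range q
  · intro j
    by_cases h : (j : ℕ) < q <;> simp [h]
end

section
/- The state x is reconstructible from X under q attacks if and only if 2q < N; that is, for every x, x̄ ∈ ℝ, noise m ∈ ℝᴺ, and attacks a, ā ∈ ℝᴺ each with support of cardinality ≤ q, the implication (x·𝟙 + m + a = x̄·𝟙 + m + ā ⟹ x = x̄) holds for all such choices if and only if 2q < N. -/
lemma card_lt_aux (N q : ℕ) : ({j : Fin N | (j : ℕ) < q} : Set (Fin N)).ncard ≤ q := by
  classical
  have : ({j : Fin N | (j : ℕ) < q} : Set (Fin N)) =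
      ↑(Finset.univ.filter (fun j : Fin N => (j : ℕ) < q)) := by
    ext j; simp
  rw [this, Set.ncard_coe_finset]
  have := Finset.card_le_card_of_injOn (f := fun j : Fin N => (j : ℕ))
    (s := Finset.univ.filter (fun j : Fin N => (j : ℕ) < q))
    (t := Finset.range q) (by intro j hj; simp at hj ⊢; exact hj)
    (by intro x _ y _ h; exact Fin.ext h)
  simpa using this

/-- reconstructability iff 2q < N. -/
theorem stmt4 (N q : ℕ) (hN : 1 ≤ N) :
    (∀ (x xbar : ℝ) (m a abar : Fin N → ℝ),
        ({j | a j ≠ 0} : Set (Fin N)).ncard ≤ q →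
        ({j | abar j ≠ 0} : Set (Fin N)).ncard ≤ q →
        (∀ j, x + m j + a j = xbar + m j + abar j) → x = xbar)
      ↔ 2 * q < N := by
  classical
  constructor
  · intro h
    by_contra hlt
    push_neg at hlt  -- N ≤ 2q
    set a : Fin N → ℝ := fun j => if (j : ℕ) < q then 1 else 0 with ha
    set abar : Fin N → ℝ := fun j => if (j : ℕ) < q then 0 else -1 with habar
    have hsa : ({j | a j ≠ 0} : Set (Fin N)).ncard ≤ q := by
      refine le_trans (Set.ncard_le_ncard ?_ (Set.toFinite _)) (card_lt_aux N q)
      intro j hj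
      simp only [ha, Set.mem_setOf_eq] at hj ⊢
      by_contra hc; simp [hc] at hj
    have hsb : ({j | abar j ≠ 0} : Set (Fin N)).ncard ≤ q := by
      have hsub : ({j | abar j ≠ 0} : Set (Fin N)) ⊆ {j : Fin N | q ≤ (j : ℕ)} := by
        intro j hj
        simp only [habar, Set.mem_setOf_eq] at hj ⊢
        by_contra hc; push_neg at hc; simp [hc] at hj
      refine le_trans (Set.ncard_le_ncard hsub (Set.toFinite _)) ?_
      have heq : ({j : Fin N | q ≤ (j : ℕ)} : Set (Fin N)) =
          ↑(Finset.univ.filter (fun j : Fin N => q ≤ (j : ℕ))) := by ext j; simp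
      rw [heq, Set.ncard_coe_finset]
      have := Finset.card_le_card_of_injOn (f := fun j : Fin N => (j : ℕ) - q)
        (s := Finset.univ.filter (fun j : Fin N => q ≤ (j : ℕ)))
        (t := Finset.range q)
        (by intro j hj; simp at hj ⊢; omega)
        (by intro x hx y hy hxy
            simp at hx hy hxy
            exact Fin.ext (by omega))
      simpa using this
    have := h 0 1 0 a abar hsa hsb (by
      intro j
      simp only [ha, habar, Pi.zero_apply]
      by_cases hj : (j : ℕ) < q <;> simp [hj])
    norm_num at this
  · intro h2 x xbar m a abar hsa hsb heq
    have hunion : (({j | a j ≠ 0} ∪ {j | abar j ≠ 0}) : Set (Fin N)).ncard < N := by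
      calc (({j | a j ≠ 0} ∪ {j | abar j ≠ 0}) : Set (Fin N)).ncard
          ≤ _ + _ := Set.ncard_union_le _ _
        _ ≤ 2 * q := by omega
        _ < N := h2
    have hne : (({j | a j ≠ 0} ∪ {j | abar j ≠ 0}) : Set (Fin N)) ≠ Set.univ := by
      intro hc
      rw [hc] at hunion
      simp [Set.ncard_univ] at hunion
    obtain ⟨j, hj⟩ : ∃ j : Fin N, j ∉ ({j | a j ≠ 0} ∪ {j | abar j ≠ 0} : Set (Fin N)) := by
      by_contra hc; push_neg at hc
      exact hne (Set.eq_univ_of_forall hc)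
    simp only [Set.mem_union, Set.mem_setOf_eq, not_or, not_not] at hj
    have := heq j
    rw [hj.1, hj.2] at this
    linarith
end

section
/- Secure fusion error bound: let σ be any subset of {1,...,N} of cardinality N − q minimizing π_J = max_{j∈J} |x̂_J − Xⱼ| over all subsets J of cardinality N − q. Then the fused estimate x̂_σ satisfies |x̂_σ − x| ≤ 3||m||∞. -/
open Finset

/-- Arithmetic mean of `X` over the index set `J`. -/
noncomputable def meanOn {N : ℕ} (J : Finset (Fin N)) (X : Fin N → ℝ) : ℝ :=
  (∑ j ∈ J, X j) / J.card

/-- `‖m‖_∞ = max_j |m j|` (0 if `N = 0`). -/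
noncomputable def minf {N : ℕ} (m : Fin N → ℝ) : ℝ :=
  if h : (univ : Finset (Fin N)).Nonempty then univ.sup' h (fun j => |m j|) else 0

/-- `π_J = max_{j ∈ J} |x̂_J - X j|` (0 if `J = ∅`). -/
noncomputable def piJ {N : ℕ} (J : Finset (Fin N)) (X : Fin N → ℝ) : ℝ :=
  if h : J.Nonempty then J.sup' h (fun j => |meanOn J X - X j|) else 0

/-- secure fusion error bound. -/
theorem stmt8 (N q : ℕ) (hq : 2 * q < N) (x : ℝ) (m a X : Fin N → ℝ)
    (hX : ∀ j, X j = x + m j + a j)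
    (ha : ({j | a j ≠ 0} : Set (Fin N)).ncard ≤ q)
    (σ : Finset (Fin N)) (hσ : σ.card = N - q)
    (hmin : ∀ J : Finset (Fin N), J.card = N - q → piJ σ X ≤ piJ J X) :
    |meanOn σ X - x| ≤ 3 * minf m := by
  have hN : 0 < N := by omega
  have hne : (univ : Finset (Fin N)).Nonempty := ⟨⟨0, hN⟩, mem_univ _⟩
  have hMle : ∀ j, |m j| ≤ minf m := fun j => by
    rw [minf, dif_pos hne]; exact Finset.le_sup' (fun j => |m j|) (mem_univ j)
  have hAcard : (univ.filter (fun j => a j ≠ 0)).card ≤ q := by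
    have h1 : ({j | a j ≠ 0} : Set (Fin N)).ncard
        = (univ.filter (fun j => a j ≠ 0)).card := by
      rw [Set.ncard_eq_toFinset_card']
      congr 1
      ext j; simp
    omega
  have hCsplit := Finset.card_filter_add_card_filter_not
    (s := (univ : Finset (Fin N))) (p := fun j => a j = 0)
  simp only [card_univ, Fintype.card_fin] at hCsplit
  have hCcard : N - q ≤ (univ.filter (fun j => a j = 0)).card := by
    have heq : (univ.filter (fun j => ¬ a j = 0)).card
        = (univ.filter (fun j => a j ≠ 0)).card := rfl
    omega
  obtain ⟨J0, hJ0sub, hJ0card⟩ := Finset.exists_subset_card_eq hCcard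
  have hJ0ne : J0.Nonempty := Finset.card_pos.mp (by omega)
  have hJ0clean : ∀ j ∈ J0, a j = 0 := fun j hj => by
    have := hJ0sub hj; simp only [mem_filter] at this; exact this.2
  have hJ0cpos : (0:ℝ) < (J0.card : ℝ) := by
    exact_mod_cast Finset.card_pos.mpr hJ0ne
  have hpiJ0 : piJ J0 X ≤ 2 * minf m := by
    rw [piJ, dif_pos hJ0ne]
    apply Finset.sup'_le
    intro j hj
    have hsum : ∑ i ∈ J0, X i = J0.card * x + ∑ i ∈ J0, m i := by
      have heq : ∀ i ∈ J0, X i = x + m i := fun i hi => by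
        rw [hX i, hJ0clean i hi]; ring
      rw [Finset.sum_congr rfl heq, Finset.sum_add_distrib, Finset.sum_const, nsmul_eq_mul]
    have hmean : meanOn J0 X - X j = (∑ i ∈ J0, m i) / J0.card - m j := by
      rw [meanOn, hsum, hX j, hJ0clean j hj]
      field_simp
      ring
    rw [hmean]
    have h1 : |(∑ i ∈ J0, m i) / J0.card| ≤ minf m := by
      rw [abs_div, abs_of_pos hJ0cpos, div_le_iff₀ hJ0cpos]
      calc |∑ i ∈ J0, m i| ≤ ∑ i ∈ J0, |m i| := Finset.abs_sum_le_sum_abs _ _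
        _ ≤ ∑ _i ∈ J0, minf m := Finset.sum_le_sum (fun i _ => hMle i)
        _ = J0.card * minf m := by rw [Finset.sum_const, nsmul_eq_mul]
        _ = minf m * J0.card := mul_comm _ _
    calc |(∑ i ∈ J0, m i) / J0.card - m j|
        ≤ |(∑ i ∈ J0, m i) / J0.card| + |m j| := abs_sub _ _
      _ ≤ minf m + minf m := add_le_add h1 (hMle j)
      _ = 2 * minf m := by ring
  have hpiσ : piJ σ X ≤ 2 * minf m := (hmin J0 hJ0card).trans hpiJ0
  have hσne : σ.Nonempty := Finset.card_pos.mp (by omega)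
  have hclean : ∃ j ∈ σ, a j = 0 := by
    by_contra h
    push_neg at h
    have hsub : σ ⊆ univ.filter (fun j => a j ≠ 0) := fun j hj =>
      mem_filter.mpr ⟨mem_univ _, h j hj⟩
    have := Finset.card_le_card hsub
    omega
  obtain ⟨j, hjσ, hja⟩ := hclean
  have h1 : |meanOn σ X - X j| ≤ piJ σ X := by
    rw [piJ, dif_pos hσne]; exact Finset.le_sup' (fun j => |meanOn σ X - X j|) hjσ
  have h2 : X j = x + m j := by rw [hX, hja]; ring
  calc |meanOn σ X - x| = |(meanOn σ X - X j) + m j| := by rw [h2]; ring_nf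
    _ ≤ |meanOn σ X - X j| + |m j| := abs_add_le _ _
    _ ≤ 2 * minf m + minf m := add_le_add (h1.trans hpiσ) (hMle j)
    _ = 3 * minf m := by ring
end

section
/- If σ ⊆ {1,...,N} has cardinality N − q with 2q < N, and at most q indices are attacked, then σ contains an attack-free index j̄, and for the minimizing subset σ of π_J, one has |x̂_σ − x| ≤ π_σ + |m_{j̄}|. -/
open Finset

theorem stmt9 (N q : ℕ) (hq : 2 * q < N) (x : ℝ) (m a X : Fin N → ℝ)
    (hX : ∀ j, X j = x + m j + a j)
    (ha : ({j | a j ≠ 0} : Set (Fin N)).ncard ≤ q)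
    (σ : Finset (Fin N)) (hσ : σ.card = N - q)
    (hmin : ∀ J : Finset (Fin N), J.card = N - q → piJ σ X ≤ piJ J X) :
    ∃ jbar ∈ σ, a jbar = 0 ∧ |meanOn σ X - x| ≤ piJ σ X + |m jbar| := by
  classical
  set A : Finset (Fin N) := univ.filter (fun j => a j ≠ 0) with hA
  have hAcard : A.card ≤ q := by
    have : ({j | a j ≠ 0} : Set (Fin N)).ncard = A.card := by
      rw [Set.ncard_eq_toFinset_card']
      congr 1
      ext j; simp [hA]
    omega
  have hσA : A.card < σ.card := by omega
  obtain ⟨jbar, hj⟩ := (σ \ A).nonempty_of_ne_empty (by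
    intro h
    have := Finset.card_le_card (Finset.sdiff_eq_empty_iff_subset.mp h)
    omega)
  have hjσ : jbar ∈ σ := (Finset.mem_sdiff.mp hj).1
  have hja : a jbar = 0 := by
    have := (Finset.mem_sdiff.mp hj).2
    simp [hA] at this; exact this
  refine ⟨jbar, hjσ, hja, ?_⟩
  have hσne : σ.Nonempty := ⟨jbar, hjσ⟩
  have hpi : |meanOn σ X - X jbar| ≤ piJ σ X := by
    rw [piJ, dif_pos hσne]
    exact Finset.le_sup' (fun j => |meanOn σ X - X j|) hjσ
  have hXj : X jbar = x + m jbar := by rw [hX, hja]; ring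
  calc |meanOn σ X - x| = |(meanOn σ X - X jbar) + m jbar| := by rw [hXj]; ring_nf
    _ ≤ |meanOn σ X - X jbar| + |m jbar| := abs_add_le _ _
    _ ≤ piJ σ X + |m jbar| := by linarith
end

section
/- If 2q ≥ N, two disjoint-or-overlapping index sets W, W̄ ⊆ {1,...,N} each of cardinality min(q, N) can be chosen with W ∪ W̄ = {1,...,N}; consequently one can construct attacks a, ā supported in W and W̄ respectively such that ā − a = (x − x̄)·𝟙 for any x ≠ x̄, making the two states indistinguishable. -/
open Finset

lemma card_filter_lt_fin (N m : ℕ) (h : m ≤ N) :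
    (Finset.univ.filter (fun j : Fin N => j.val < m)).card = m := by
  have : (Finset.univ.filter (fun j : Fin N => j.val < m)) =
      (Finset.range m).attachFin (fun x hx => lt_of_lt_of_le (mem_range.mp hx) h) := by
    ext j; simp
  rw [this, card_attachFin, card_range]

theorem stmt14 (N q : ℕ) (hN : 1 ≤ N) (hq : N ≤ 2 * q) :
    ∃ W Wbar : Finset (Fin N),
      W.card = min q N ∧ Wbar.card = min q N ∧ W ∪ Wbar = univ ∧
      ∀ x xbar : ℝ, x ≠ xbar →
        ∃ a abar : Fin N → ℝ,
          (∀ j, a j ≠ 0 → j ∈ W) ∧ (∀ j, abar j ≠ 0 → j ∈ Wbar) ∧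
          ∀ j, abar j - a j = x - xbar := by
  set m := min q N with hm
  have hmN : m ≤ N := min_le_right _ _
  have h2m : N ≤ 2 * m := by omega
  refine ⟨univ.filter (fun j => j.val < m), univ.filter (fun j => N - m ≤ j.val), ?_, ?_, ?_, ?_⟩
  · exact card_filter_lt_fin N m hmN
  · have he : (univ.filter (fun j : Fin N => N - m ≤ j.val)) =
        (univ.filter (fun j : Fin N => j.val < N - m))ᶜ := by
      ext j; simp [not_lt]
    rw [he, card_compl, card_filter_lt_fin N (N - m) (by omega)]
    simp; omega
  · ext j
    simp only [mem_union, mem_filter, mem_univ, true_and, iff_true]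
    omega
  · intro x xbar hx
    refine ⟨fun j => if N - m ≤ j.val then 0 else xbar - x,
      fun j => if N - m ≤ j.val then x - xbar else 0, ?_, ?_, ?_⟩
    · intro j hj
      simp only [mem_filter, mem_univ, true_and]
      by_contra h
      push_neg at h
      have h1 : N - m ≤ j.val := by omega
      simp [h1] at hj
    · intro j hj
      simp only [mem_filter, mem_univ, true_and]
      by_contra h
      simp [h] at hj
    · intro j
      by_cases h : N - m ≤ j.val <;> simp [h] <;> ring
end

section
/- Monotonicity of the fusion bound in noise: if |mⱼ| ≤ γ for all j ∈ {1,...,N} and the attack support has cardinality at most q with 2q < N, then the fused estimate x̂_σ (σ a minimizer of π_J over subsets of cardinality N−q) satisfies |x̂_σ − x| ≤ 3γ. -/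
open Finset

theorem stmt15 (N q : ℕ) (hq : 2 * q < N) (γ x : ℝ) (hγ : 0 ≤ γ)
    (m a X : Fin N → ℝ) (hX : ∀ j, X j = x + m j + a j)
    (hm : ∀ j, |m j| ≤ γ)
    (ha : ({j | a j ≠ 0} : Set (Fin N)).ncard ≤ q)
    (σ : Finset (Fin N)) (hσ : σ.card = N - q)
    (hmin : ∀ J : Finset (Fin N), J.card = N - q → piJ σ X ≤ piJ J X) :
    |meanOn σ X - x| ≤ 3 * γ := by
  have hA : ({j | a j ≠ 0} : Set (Fin N)) = ↑(univ.filter (fun j => a j ≠ 0)) := by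
    ext j; simp
  set A : Finset (Fin N) := univ.filter (fun j => a j ≠ 0) with hAdef
  have hAcard : A.card ≤ q := by rwa [hA, Set.ncard_coe_finset] at ha
  set B : Finset (Fin N) := univ.filter (fun j => a j = 0) with hBdef
  have hAB : A.card + B.card = N := by
    have h1 := Finset.card_filter_add_card_filter_not
      (s := (univ : Finset (Fin N))) (p := fun j => a j ≠ 0)
    have h2 : univ.filter (fun j => ¬ a j ≠ 0) = B := by
      simp [hBdef]
    rw [h2] at h1
    simpa using h1
  have hBcard : N - q ≤ B.card := by omega
  obtain ⟨J, hJB, hJcard⟩ := Finset.exists_subset_card_eq hBcard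
  have hJa : ∀ j ∈ J, a j = 0 := by
    intro j hj
    have := hJB hj
    simpa [hBdef] using this
  have hJpos : 0 < J.card := by omega
  have hJne : J.Nonempty := Finset.card_pos.mp hJpos
  have hcardne : (J.card : ℝ) ≠ 0 := Nat.cast_ne_zero.mpr hJpos.ne'
  -- mean over J
  have hmean : meanOn J X = x + (∑ j ∈ J, m j) / J.card := by
    unfold meanOn
    have hsum : ∑ j ∈ J, X j = J.card * x + ∑ j ∈ J, m j := by
      rw [Finset.sum_congr rfl (fun j hj => by rw [hX j, hJa j hj, add_zero])]
      rw [Finset.sum_add_distrib, Finset.sum_const, nsmul_eq_mul]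
    rw [hsum]
    field_simp
  -- average noise bound
  have havg : |(∑ j ∈ J, m j) / J.card| ≤ γ := by
    rw [abs_div, abs_of_nonneg (by positivity : (0:ℝ) ≤ (J.card : ℝ))]
    rw [div_le_iff₀ (by exact_mod_cast hJpos)]
    calc |∑ j ∈ J, m j| ≤ ∑ j ∈ J, |m j| := Finset.abs_sum_le_sum_abs _ _
      _ ≤ ∑ j ∈ J, γ := Finset.sum_le_sum (fun j _ => hm j)
      _ = γ * J.card := by rw [Finset.sum_const, nsmul_eq_mul]; ring
  have hpiJ : piJ J X ≤ 2 * γ := by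
    unfold piJ
    rw [dif_pos hJne]
    apply Finset.sup'_le
    intro j hj
    rw [hmean, hX j, hJa j hj, add_zero]
    have : x + (∑ i ∈ J, m i) / J.card - (x + m j) = (∑ i ∈ J, m i) / J.card - m j := by ring
    rw [this]
    calc |(∑ i ∈ J, m i) / J.card - m j| ≤ |(∑ i ∈ J, m i) / J.card| + |m j| := abs_sub _ _
      _ ≤ γ + γ := add_le_add havg (hm j)
      _ = 2 * γ := by ring
  have hpiσ : piJ σ X ≤ 2 * γ := le_trans (hmin J hJcard) hpiJ
  -- σ contains a benign index
  have hσne : σ.Nonempty := Finset.card_pos.mp (by omega)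
  obtain ⟨j, hjσ, hja⟩ : ∃ j ∈ σ, a j = 0 := by
    by_contra h
    push_neg at h
    have hsub : σ ⊆ A := by
      intro j hj
      simp [hAdef, h j hj]
    have := Finset.card_le_card hsub
    omega
  have hle : |meanOn σ X - X j| ≤ piJ σ X := by
    unfold piJ
    rw [dif_pos hσne]
    exact Finset.le_sup' (fun j => |meanOn σ X - X j|) hjσ
  have hXj : X j = x + m j := by rw [hX j, hja, add_zero]
  calc |meanOn σ X - x| ≤ |meanOn σ X - X j| + |X j - x| := abs_sub_le _ _ _
    _ ≤ 2 * γ + γ := by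
        refine add_le_add (le_trans hle hpiσ) ?_
        rw [hXj]
        simpa using hm j
    _ = 3 * γ := by ring
end
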